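/- arXiv:2410.17729 — 2 statements merged into one kernel-verified Lean document; each statement's English description precedes it below -/
import Mathlib

section
/- Let A : X → Y and A' : X' → Y be bounded linear operators between Hilbert spaces with a common target Y, and suppose range(A') ⊆ range(A). Then there exists a bounded linear operator S : X' → X with A' = A S. Conversely, if A' = A S for some bounded S, then range(A') ⊆ range(A). -/
/-!
The kernel `K` of `A` is closed, so `X = K ⊕ Kᗮ` and the restriction of `A` to `Kᗮ` is injective
with the same range as `A`. Hence each `A' x` has a unique preimage in `Kᗮ`; the resulting map is
linear, and its graph `{(x, u) | A u = A' x}` is closed, so it is bounded by the closed graph theorem.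
-/

open Function

namespace ContinuousLinearMap

theorem exists_comp_eq_of_injective_of_range_le
    {𝕜 E F G : Type*} [NontriviallyNormedField 𝕜]
    [NormedAddCommGroup E] [NormedSpace 𝕜 E] [CompleteSpace E]
    [NormedAddCommGroup F] [NormedSpace 𝕜 F]
    [NormedAddCommGroup G] [NormedSpace 𝕜 G] [CompleteSpace G]
    {T : E →L[𝕜] F} (hT : Injective T) {B : G →L[𝕜] F} (h : B.range ≤ T.range) :
    ∃ S : G →L[𝕜] E, T ∘L S = B := by
  let e := LinearEquiv.ofInjective (T : E →ₗ[𝕜] F) hT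
  let S : G →ₗ[𝕜] E := e.symm ∘ₗ (B : G →ₗ[𝕜] F).codRestrict _ fun x ↦ h ⟨x, rfl⟩
  have hTS : ∀ x, T (S x) = B x := fun x ↦ congrArg Subtype.val (e.apply_symm_apply _)
  have hgraph : (S.graph : Set (G × E)) = {p | T p.2 = B p.1} := by
    ext ⟨x, y⟩
    simp only [SetLike.mem_coe, LinearMap.mem_graph_iff, Set.mem_ofPred_eq]
    exact ⟨fun hy ↦ hy ▸ hTS x, fun hy ↦ hT (hy.trans (hTS x).symm)⟩
  have hclosed : IsClosed (S.graph : Set (G × E)) :=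
    hgraph ▸ isClosed_eq (T.continuous.comp continuous_snd) (B.continuous.comp continuous_fst)
  exact ⟨.ofIsClosedGraph hclosed, ext hTS⟩

variable {𝕜 E F : Type*} [RCLike 𝕜] [NormedAddCommGroup E] [InnerProductSpace 𝕜 E]
  [NormedAddCommGroup F] [NormedSpace 𝕜 F] (A : E →L[𝕜] F)

theorem injective_comp_subtypeL_orthogonal_ker : Injective (A ∘L A.kerᗮ.subtypeL) :=
  LinearMap.injective_domRestrict_iff.2 A.ker.orthogonal_disjoint.symm

theorem range_comp_subtypeL_orthogonal_ker [CompleteSpace E] :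
    (A ∘L A.kerᗮ.subtypeL).range = A.range := by
  have : CompleteSpace A.ker := A.isClosed_ker.completeSpace_coe
  calc (A ∘L A.kerᗮ.subtypeL).range = A.kerᗮ.map (A : E →ₗ[𝕜] F) :=
        LinearMap.range_domRestrict _ _
    _ = (A.ker ⊔ A.kerᗮ).map (A : E →ₗ[𝕜] F) := by
      rw [Submodule.map_sup,
        sup_eq_right.2 (Submodule.map_le_iff_le_comap.2 (LinearMap.ker_le_comap _))]
    _ = A.range := by rw [A.ker.sup_orthogonal_of_hasOrthogonalProjection, Submodule.map_top]

theorem exists_comp_eq_iff_range_le [CompleteSpace E]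
    {G : Type*} [NormedAddCommGroup G] [NormedSpace 𝕜 G] [CompleteSpace G] {B : G →L[𝕜] F} :
    (∃ S : G →L[𝕜] E, A ∘L S = B) ↔ B.range ≤ A.range := by
  refine ⟨fun ⟨S, hS⟩ ↦ hS ▸ LinearMap.range_comp_le_range _ _, fun h ↦ ?_⟩
  obtain ⟨S, hS⟩ := exists_comp_eq_of_injective_of_range_le A.injective_comp_subtypeL_orthogonal_ker
    (A.range_comp_subtypeL_orthogonal_ker ▸ h)
  exact ⟨A.kerᗮ.subtypeL ∘L S, hS⟩

end ContinuousLinearMap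

theorem stmt9_general {X X' Y : Type*}
    [NormedAddCommGroup X] [InnerProductSpace ℝ X] [CompleteSpace X]
    [NormedAddCommGroup X'] [InnerProductSpace ℝ X'] [CompleteSpace X']
    [NormedAddCommGroup Y] [InnerProductSpace ℝ Y]
    (A : X →L[ℝ] Y) (A' : X' →L[ℝ] Y) :
    Set.range A' ⊆ Set.range A ↔ ∃ S : X' →L[ℝ] X, ∀ x, A' x = A (S x) := by
  change (A'.range : Set Y) ⊆ A.range ↔ _
  rw [SetLike.coe_subset_coe, ← A.exists_comp_eq_iff_range_le]
  simp only [ContinuousLinearMap.ext_iff, ContinuousLinearMap.comp_apply, eq_comm]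

/-- Douglas factorization, common target: For bounded `A : X → Y`,
`A' : X' → Y`, one has `range(A') ⊆ range(A)` iff there is a bounded `S : X' → X`
with `A' = A S`. -/
theorem stmt9 {X X' Y : Type*}
    [NormedAddCommGroup X] [InnerProductSpace ℝ X] [CompleteSpace X] [SecondCountableTopology X]
    [NormedAddCommGroup X'] [InnerProductSpace ℝ X'] [CompleteSpace X'] [SecondCountableTopology X']
    [NormedAddCommGroup Y] [InnerProductSpace ℝ Y] [CompleteSpace Y] [SecondCountableTopology Y]
    (A : X →L[ℝ] Y) (A' : X' →L[ℝ] Y) :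
    Set.range A' ⊆ Set.range A ↔ ∃ S : X' →L[ℝ] X, ∀ x, A' x = A (S x) :=
  stmt9_general A A'
end

section
/- Let A : X → Y and A' : X' → Y be bounded linear operators into a common Hilbert space Y. Then range(A') ⊆ range(A) if and only if there exists a constant C ≥ 0 such that ‖(A')* y‖ ≤ C ‖A* y‖ for all y ∈ Y. -/
/-!
`range A' ⊆ range A` makes the closed subspace `{(x, x') | A x = A' x'}` of `X × X'` project onto
`X'`, so by the open mapping theorem every `A' x'` has a preimage `x` with `‖x‖ ≤ C ‖x'‖`;
testing `x' = A'* y` gives `‖A'* y‖² = re ⟪A* y, x⟫ ≤ C ‖A* y‖ ‖A'* y‖`.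
Conversely, the majorization makes `A* y ↦ ⟪A' x', y⟫` a well-defined functional on `range A*`
bounded by `C ‖x'‖`; its Hahn–Banach extension is `⟪x, ·⟫` for some `x` (Riesz), and then
`A x = A' x'`.
-/

open Set

section Factorization

variable {𝕜 E F : Type*} [RCLike 𝕜] [AddCommGroup E] [Module 𝕜 E]
  [SeminormedAddCommGroup F] [NormedSpace 𝕜 F]

theorem LinearMap.exists_strongDual_comp_eq_of_norm_le (T : E →ₗ[𝕜] F) (f : E →ₗ[𝕜] 𝕜) (M : ℝ)
    (hf : ∀ y, ‖f y‖ ≤ M * ‖T y‖) : ∃ g : StrongDual 𝕜 F, ∀ y, g (T y) = f y := by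
  have hker : LinearMap.ker T ≤ LinearMap.ker f := fun y hy => by
    simpa [LinearMap.mem_ker.mp hy] using hf y
  let φ : LinearMap.range T →ₗ[𝕜] 𝕜 := (LinearMap.ker T).liftQ f hker ∘ₗ T.quotKerEquivRange.symm
  have hφ : ∀ y, φ ⟨T y, LinearMap.mem_range_self T y⟩ = f y := fun y => by simp [φ]
  have hbound : ∀ v, ‖φ v‖ ≤ M * ‖v‖ := by
    rintro ⟨_, y, rfl⟩
    simpa [hφ] using hf y
  obtain ⟨g, hg, -⟩ := exists_extension_norm_eq _ (φ.mkContinuous M hbound)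
  exact ⟨g, fun y => (hg ⟨T y, _⟩).trans (hφ y)⟩

end Factorization

theorem ContinuousLinearMap.exists_preimage_norm_le_of_range_subset {𝕜 E E' F : Type*}
    [NontriviallyNormedField 𝕜]
    [NormedAddCommGroup E] [NormedSpace 𝕜 E] [CompleteSpace E]
    [NormedAddCommGroup E'] [NormedSpace 𝕜 E'] [CompleteSpace E']
    [NormedAddCommGroup F] [NormedSpace 𝕜 F]
    (A : E →L[𝕜] F) (A' : E' →L[𝕜] F) (h : range A' ⊆ range A) :
    ∃ C > 0, ∀ x', ∃ x, A x = A' x' ∧ ‖x‖ ≤ C * ‖x'‖ := by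
  let G := (A.comp (fst 𝕜 E E')).eqLocus (A'.comp (snd 𝕜 E E'))
  have hG : ∀ p : E × E', p ∈ G ↔ A p.1 = A' p.2 := fun p => by simp [G]
  have : CompleteSpace G := (isClosed_eqLocus _ _).completeSpace_coe
  have hsurj : Function.Surjective ((snd 𝕜 E E').comp G.subtypeL) := fun x' => by
    obtain ⟨x, hx⟩ := h (mem_range_self x')
    exact ⟨⟨(x, x'), (hG _).2 hx⟩, rfl⟩
  obtain ⟨C, hC, hpre⟩ := exists_preimage_norm_le _ hsurj
  refine ⟨C, hC, fun x' => ?_⟩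
  obtain ⟨⟨p, hp⟩, rfl, hnorm⟩ := hpre x'
  exact ⟨p.1, (hG p).1 hp, (_root_.norm_fst_le p).trans hnorm⟩

section Adjoint

open ContinuousLinearMap RCLike
open scoped InnerProductSpace

variable {𝕜 X X' Y : Type*} [RCLike 𝕜]
  [NormedAddCommGroup X] [InnerProductSpace 𝕜 X] [CompleteSpace X]
  [NormedAddCommGroup X'] [InnerProductSpace 𝕜 X'] [CompleteSpace X']
  [NormedAddCommGroup Y] [InnerProductSpace 𝕜 Y] [CompleteSpace Y]
  (A : X →L[𝕜] Y) (A' : X' →L[𝕜] Y)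

theorem ContinuousLinearMap.exists_norm_adjoint_le_of_range_subset (h : range A' ⊆ range A) :
    ∃ C : ℝ, 0 ≤ C ∧ ∀ y, ‖adjoint A' y‖ ≤ C * ‖adjoint A y‖ := by
  obtain ⟨C, hC, hpre⟩ := A.exists_preimage_norm_le_of_range_subset A' h
  refine ⟨C, hC.le, fun y => ?_⟩
  obtain ⟨x, hx, hxC⟩ := hpre (adjoint A' y)
  have hsq : ‖adjoint A' y‖ * ‖adjoint A' y‖ ≤ C * ‖adjoint A y‖ * ‖adjoint A' y‖ := calc
    ‖adjoint A' y‖ * ‖adjoint A' y‖ = re ⟪adjoint A' y, adjoint A' y⟫_𝕜 :=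
        (inner_self_eq_norm_mul_norm (𝕜 := 𝕜) _).symm
    _ = re ⟪adjoint A y, x⟫_𝕜 := by rw [adjoint_inner_left, adjoint_inner_left, hx]
    _ ≤ ‖adjoint A y‖ * ‖x‖ := re_inner_le_norm _ _
    _ ≤ ‖adjoint A y‖ * (C * ‖adjoint A' y‖) := by gcongr
    _ = C * ‖adjoint A y‖ * ‖adjoint A' y‖ := by ring
  rcases (norm_nonneg (adjoint A' y)).eq_or_lt with h0 | hpos
  · rw [← h0]; positivity
  · exact le_of_mul_le_mul_right hsq hpos

theorem ContinuousLinearMap.range_subset_range_of_norm_adjoint_le {C : ℝ}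
    (hC : ∀ y, ‖adjoint A' y‖ ≤ C * ‖adjoint A y‖) : range A' ⊆ range A := by
  rintro _ ⟨x', rfl⟩
  obtain ⟨g, hg⟩ := (adjoint A).toLinearMap.exists_strongDual_comp_eq_of_norm_le
    (innerSL 𝕜 (A' x')).toLinearMap (‖x'‖ * C) fun y => calc
      ‖⟪A' x', y⟫_𝕜‖ = ‖⟪x', adjoint A' y⟫_𝕜‖ := by rw [adjoint_inner_right]
      _ ≤ ‖x'‖ * ‖adjoint A' y‖ := norm_inner_le_norm _ _
      _ ≤ ‖x'‖ * (C * ‖adjoint A y‖) := by gcongr; exact hC y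
      _ = ‖x'‖ * C * ‖adjoint A y‖ := by ring
  refine ⟨(InnerProductSpace.toDual 𝕜 X).symm g, ext_inner_right 𝕜 fun y => ?_⟩
  rw [← adjoint_inner_right, InnerProductSpace.toDual_symm_apply]
  exact hg y

end Adjoint

theorem stmt10_general {X X' Y : Type*}
    [NormedAddCommGroup X] [InnerProductSpace ℝ X] [CompleteSpace X]
    [NormedAddCommGroup X'] [InnerProductSpace ℝ X'] [CompleteSpace X']
    [NormedAddCommGroup Y] [InnerProductSpace ℝ Y] [CompleteSpace Y]
    (A : X →L[ℝ] Y) (A' : X' →L[ℝ] Y) :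
    Set.range A' ⊆ Set.range A ↔
      ∃ C : ℝ, 0 ≤ C ∧ ∀ y : Y,
        ‖ContinuousLinearMap.adjoint A' y‖ ≤ C * ‖ContinuousLinearMap.adjoint A y‖ :=
  ⟨A.exists_norm_adjoint_le_of_range_subset A',
    fun ⟨_, _, hC⟩ => A.range_subset_range_of_norm_adjoint_le A' hC⟩

/-- Douglas majorization: For bounded `A : X → Y`, `A' : X' → Y`,
`range(A') ⊆ range(A)` iff there is `C ≥ 0` with `‖(A')* y‖ ≤ C ‖A* y‖` for all `y`. -/
theorem stmt10 {X X' Y : Type*}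
    [NormedAddCommGroup X] [InnerProductSpace ℝ X] [CompleteSpace X] [SecondCountableTopology X]
    [NormedAddCommGroup X'] [InnerProductSpace ℝ X'] [CompleteSpace X'] [SecondCountableTopology X']
    [NormedAddCommGroup Y] [InnerProductSpace ℝ Y] [CompleteSpace Y] [SecondCountableTopology Y]
    (A : X →L[ℝ] Y) (A' : X' →L[ℝ] Y) :
    Set.range A' ⊆ Set.range A ↔
      ∃ C : ℝ, 0 ≤ C ∧ ∀ y : Y,
        ‖ContinuousLinearMap.adjoint A' y‖ ≤ C * ‖ContinuousLinearMap.adjoint A y‖ :=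
  stmt10_general A A'
end
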